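/- Let (P_s)_{s∈S} be a finite family of Hermitian projection matrices with P_s P_t = 0 for s ≠ t and Σ_s P_s = P, and let (𝓔_s)_{s∈S} be pairwise distinct real numbers with P H P = Σ_s 𝓔_s P_s. Then a dark state exists (i.e. there is a density matrix ρ with L(ρ) = 0 and ρ = PρP) if and only if there exist s ∈ S and a nonzero vector ψ with P_s ψ = ψ and Q H ψ = 0; in that case (ψψᴴ)/‖ψ‖² is a (pure) dark state. -/

import Mathlib

open Matrix Complex BigOperators ComplexOrder

/-- Projection onto the ground-state indices. -/
noncomputable def Pg (Ng Ne : ℕ) : Matrix (Fin Ng ⊕ Fin Ne) (Fin Ng ⊕ Fin Ne) ℂ :=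
  Matrix.diagonal (Sum.elim (fun _ => 1) (fun _ => 0))

/-- Projection onto the excited-state indices. -/
noncomputable def Qe (Ng Ne : ℕ) : Matrix (Fin Ng ⊕ Fin Ne) (Fin Ng ⊕ Fin Ne) ℂ :=
  1 - Pg Ng Ne

/-- Jump operator |g_i⟩⟨e_j|. -/
noncomputable def jump (Ng Ne : ℕ) (i : Fin Ng) (j : Fin Ne) :
    Matrix (Fin Ng ⊕ Fin Ne) (Fin Ng ⊕ Fin Ne) ℂ :=
  Matrix.single (Sum.inl i) (Sum.inr j) 1

/-- Decay operator Γ = Σ γ_{ij} σ_{ij}ᴴ σ_{ij}. -/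
noncomputable def Gam (Ng Ne : ℕ) (γ : Fin Ng → Fin Ne → ℝ) :
    Matrix (Fin Ng ⊕ Fin Ne) (Fin Ng ⊕ Fin Ne) ℂ :=
  ∑ i, ∑ j, (γ i j : ℂ) • ((jump Ng Ne i j)ᴴ * jump Ng Ne i j)

/-- The Lindblad generator. -/
noncomputable def Lindblad (Ng Ne : ℕ) (H : Matrix (Fin Ng ⊕ Fin Ne) (Fin Ng ⊕ Fin Ne) ℂ)
    (γ : Fin Ng → Fin Ne → ℝ) (ρ : Matrix (Fin Ng ⊕ Fin Ne) (Fin Ng ⊕ Fin Ne) ℂ) :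
    Matrix (Fin Ng ⊕ Fin Ne) (Fin Ng ⊕ Fin Ne) ℂ :=
  (-Complex.I) • (H * ρ - ρ * H) +
    ∑ i, ∑ j, (γ i j : ℂ) •
      (jump Ng Ne i j * ρ * (jump Ng Ne i j)ᴴ -
        (1 / 2 : ℂ) • ((jump Ng Ne i j)ᴴ * jump Ng Ne i j * ρ +
          ρ * ((jump Ng Ne i j)ᴴ * jump Ng Ne i j)))

/-- A dark state: a density matrix annihilated by the Lindbladian and supported on the
ground-state subspace. -/
def IsDarkState (Ng Ne : ℕ) (H : Matrix (Fin Ng ⊕ Fin Ne) (Fin Ng ⊕ Fin Ne) ℂ)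
    (γ : Fin Ng → Fin Ne → ℝ) (ρ : Matrix (Fin Ng ⊕ Fin Ne) (Fin Ng ⊕ Fin Ne) ℂ) : Prop :=
  ρ.PosSemidef ∧ ρ.trace = 1 ∧ Lindblad Ng Ne H γ ρ = 0 ∧ ρ = Pg Ng Ne * ρ * Pg Ng Ne

/-!
Every jump operator `|g_i⟩⟨e_j|` annihilates the ground space, so on states with `ρ = PρP` the
dissipator vanishes and `ρ` is stationary iff it commutes with `H`. Such a `ρ` then commutes with
`PHP = ∑ 𝓔_s P_s`; as the energies are distinct, `ρ` is block diagonal, `ρ P_s = P_s ρ P_s`, and a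
nonzero column `ψ` of a nonzero block `ρ P_s` satisfies `P_s ψ = ψ` and `QHψ = 0` because
`QHρ = QρH = 0`. Conversely, `P_s ψ = ψ` and `QHψ = 0` give `Hψ = PHPψ = 𝓔_s ψ`, so the pure state
of `ψ` commutes with `H`.
-/

section OrthogonalIdempotents

variable {𝕜 A ι : Type*} [Fintype ι]

section Semiring

variable [CommSemiring 𝕜] [Semiring A] [Algebra 𝕜 A] {p : ι → A}

theorem sum_mul_of_orthogonal (idem : ∀ s, p s * p s = p s)
    (orth : ∀ s t, s ≠ t → p s * p t = 0) (t : ι) : (∑ s, p s) * p t = p t := by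
  rw [Finset.sum_mul, Fintype.sum_eq_single t fun s hs => orth s t hs, idem]

theorem sum_smul_mul_of_orthogonal (idem : ∀ s, p s * p s = p s)
    (orth : ∀ s t, s ≠ t → p s * p t = 0) (c : ι → 𝕜) (t : ι) :
    (∑ s, c s • p s) * p t = c t • p t := by
  rw [Finset.sum_mul, Fintype.sum_eq_single t fun s hs => by rw [smul_mul_assoc, orth s t hs,
    smul_zero], smul_mul_assoc, idem]

theorem mul_sum_smul_of_orthogonal (idem : ∀ s, p s * p s = p s)
    (orth : ∀ s t, s ≠ t → p s * p t = 0) (c : ι → 𝕜) (t : ι) :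
    p t * (∑ s, c s • p s) = c t • p t := by
  rw [Finset.mul_sum, Fintype.sum_eq_single t fun s hs => by rw [mul_smul_comm,
    orth t s (Ne.symm hs), smul_zero], mul_smul_comm, idem]

theorem mul_eq_mul_mul_of_forall_mul_mul_eq_zero {x : A} (hx : (∑ s, p s) * x = x)
    (hcross : ∀ s t, s ≠ t → p s * x * p t = 0) (t : ι) : x * p t = p t * x * p t := by
  conv_lhs => rw [← hx]
  rw [Finset.sum_mul, Finset.sum_mul, Fintype.sum_eq_single t fun s hs => hcross s t hs]

end Semiring

theorem mul_mul_eq_zero_of_commute_sum_smul [Field 𝕜] [Ring A] [Algebra 𝕜 A] {p : ι → A}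
    (idem : ∀ s, p s * p s = p s) (orth : ∀ s t, s ≠ t → p s * p t = 0)
    {c : ι → 𝕜} (hc : Function.Injective c) {x : A}
    (hx : Commute (∑ s, c s • p s) x) {s t : ι} (hst : s ≠ t) : p s * x * p t = 0 := by
  have key : c s • (p s * x * p t) = c t • (p s * x * p t) := by
    calc c s • (p s * x * p t) = p s * (∑ u, c u • p u) * x * p t := by
          rw [mul_sum_smul_of_orthogonal idem orth, smul_mul_assoc, smul_mul_assoc]
      _ = p s * x * ((∑ u, c u • p u) * p t) := by rw [mul_assoc (p s), hx.eq]; noncomm_ring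
      _ = c t • (p s * x * p t) := by rw [sum_smul_mul_of_orthogonal idem orth, mul_smul_comm]
  have hne : c s - c t ≠ 0 := sub_ne_zero.mpr (hc.ne hst)
  exact (smul_eq_zero.mp (by rw [sub_smul, key, sub_self])).resolve_left hne

end OrthogonalIdempotents

theorem Commute.mul_mul_of_mul_eq {A : Type*} [Semigroup A] {P H x : A} (h : Commute H x)
    (hPx : P * x = x) (hxP : x * P = x) : Commute (P * H * P) x := by
  calc P * H * P * x = P * (H * (P * x)) := by simp only [mul_assoc]
    _ = x * H := by rw [hPx, h.eq, ← mul_assoc, hPx]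
    _ = H * (x * P) := by rw [hxP, h.eq]
    _ = x * P * H * P := by rw [← mul_assoc, h.eq, hxP]
    _ = x * (P * H * P) := by simp only [mul_assoc]

section PureState

variable {n : Type*} [Fintype n]

noncomputable def pureState (ψ : n → ℂ) : Matrix n n ℂ :=
  (star ψ ⬝ᵥ ψ)⁻¹ • vecMulVec ψ (star ψ)

theorem posSemidef_pureState (ψ : n → ℂ) : (pureState ψ).PosSemidef :=
  (posSemidef_vecMulVec_self_star ψ).smul (inv_nonneg.mpr (dotProduct_star_self_nonneg ψ))

theorem trace_pureState {ψ : n → ℂ} (hψ : ψ ≠ 0) : (pureState ψ).trace = 1 := by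
  rw [pureState, trace_smul, trace_vecMulVec, dotProduct_comm ψ, smul_eq_mul,
    inv_mul_cancel₀ (dotProduct_star_self_eq_zero.not.mpr hψ)]

theorem pureState_eq_mul_mul_of_mulVec_eq {P : Matrix n n ℂ} (hP : P.IsHermitian) {ψ : n → ℂ}
    (hψ : P *ᵥ ψ = ψ) : pureState ψ = P * pureState ψ * P := by
  have hψP : star ψ ᵥ* P = star ψ := by rw [← hP.eq, ← star_mulVec, hψ]
  rw [pureState, Matrix.mul_smul, Matrix.smul_mul, mul_vecMulVec, vecMulVec_mul, hψ, hψP]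

theorem commute_pureState_of_mulVec_eq_smul {H : Matrix n n ℂ} (hH : H.IsHermitian)
    {ψ : n → ℂ} {E : ℝ} (hψ : H *ᵥ ψ = (E : ℂ) • ψ) : Commute H (pureState ψ) := by
  have hψH : star ψ ᵥ* H = (E : ℂ) • star ψ := by
    rw [← hH.eq, ← star_mulVec, hψ, star_smul, Complex.star_def, Complex.conj_ofReal]
  rw [pureState, Commute, SemiconjBy, Matrix.mul_smul, Matrix.smul_mul, mul_vecMulVec,
    vecMulVec_mul, hψ, hψH, smul_vecMulVec, vecMulVec_smul]

end PureState

section MulVec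

variable {n : Type*} [Fintype n] [DecidableEq n]

theorem exists_ne_zero_mulVec_eq_of_mul_eq {R : Type*} [Semiring R] {M P A : Matrix n n R}
    (hM : M ≠ 0) (hP : P * M = M) (hA : A * M = 0) :
    ∃ ψ : n → R, ψ ≠ 0 ∧ P *ᵥ ψ = ψ ∧ A *ᵥ ψ = 0 := by
  obtain ⟨i, hi⟩ : ∃ i, M *ᵥ Pi.single i 1 ≠ 0 := by
    by_contra! h
    exact hM (ext_of_mulVec_single fun i => by rw [h, zero_mulVec])
  exact ⟨M *ᵥ Pi.single i 1, hi, by rw [mulVec_mulVec, hP],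
    by rw [mulVec_mulVec, hA, zero_mulVec]⟩

theorem mulVec_eq_smul_of_mul_mul_eq_sum_smul {R ι : Type*} [CommSemiring R] [Fintype ι]
    {p : ι → Matrix n n R} (idem : ∀ s, p s * p s = p s) (orth : ∀ s t, s ≠ t → p s * p t = 0)
    {P H : Matrix n n R} {c : ι → R} (hPHP : P * H * P = ∑ s, c s • p s) {ψ : n → R}
    (hPψ : P *ᵥ ψ = ψ) (hPHψ : P *ᵥ (H *ᵥ ψ) = H *ᵥ ψ) {s : ι} (hψ : p s *ᵥ ψ = ψ) :
    H *ᵥ ψ = c s • ψ := by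
  calc H *ᵥ ψ = (P * H * P) *ᵥ ψ := by rw [← mulVec_mulVec, hPψ, ← mulVec_mulVec, hPHψ]
    _ = ((∑ t, c t • p t) * p s) *ᵥ ψ := by rw [hPHP, ← mulVec_mulVec, hψ]
    _ = c s • ψ := by rw [sum_smul_mul_of_orthogonal idem orth, smul_mulVec, hψ]

end MulVec

section Lindblad

variable {Ng Ne : ℕ}

theorem Pg_mul_Pg : Pg Ng Ne * Pg Ng Ne = Pg Ng Ne := by
  rw [Pg, diagonal_mul_diagonal]
  congr 1
  ext (_ | _) <;> simp

theorem isHermitian_Pg : (Pg Ng Ne).IsHermitian := by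
  rw [IsHermitian, Pg, diagonal_conjTranspose]
  congr 1
  ext (_ | _) <;> simp

theorem Qe_mul_Pg : Qe Ng Ne * Pg Ng Ne = 0 := by
  rw [Qe, sub_mul, one_mul, Pg_mul_Pg, sub_self]

theorem Qe_mulVec_eq_zero_iff {v : Fin Ng ⊕ Fin Ne → ℂ} :
    Qe Ng Ne *ᵥ v = 0 ↔ Pg Ng Ne *ᵥ v = v := by
  rw [Qe, sub_mulVec, one_mulVec, sub_eq_zero, eq_comm]

theorem jump_mul_Pg (i : Fin Ng) (j : Fin Ne) : jump Ng Ne i j * Pg Ng Ne = 0 := by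
  ext a (_ | _) <;> simp [jump, Pg, mul_diagonal]

theorem Lindblad_eq_of_eq_Pg_mul_mul_Pg (H : Matrix (Fin Ng ⊕ Fin Ne) (Fin Ng ⊕ Fin Ne) ℂ)
    (γ : Fin Ng → Fin Ne → ℝ) {ρ : Matrix (Fin Ng ⊕ Fin Ne) (Fin Ng ⊕ Fin Ne) ℂ}
    (hρ : ρ = Pg Ng Ne * ρ * Pg Ng Ne) :
    Lindblad Ng Ne H γ ρ = (-Complex.I) • (H * ρ - ρ * H) := by
  have hleft : ∀ i j, jump Ng Ne i j * ρ = 0 := fun i j => by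
    rw [hρ, ← mul_assoc, ← mul_assoc, jump_mul_Pg, zero_mul, zero_mul]
  have hright : ∀ i j, ρ * (jump Ng Ne i j)ᴴ = 0 := fun i j => by
    rw [hρ, mul_assoc, ← isHermitian_Pg.eq, ← conjTranspose_mul, jump_mul_Pg,
      conjTranspose_zero, mul_zero]
  have hjump : ∀ i j, jump Ng Ne i j * ρ * (jump Ng Ne i j)ᴴ -
      (1 / 2 : ℂ) • ((jump Ng Ne i j)ᴴ * jump Ng Ne i j * ρ +
        ρ * ((jump Ng Ne i j)ᴴ * jump Ng Ne i j)) = 0 := fun i j => by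
    rw [hleft, mul_assoc, hleft, ← mul_assoc, hright]
    simp
  simp only [Lindblad, hjump, smul_zero, Finset.sum_const_zero, add_zero]

theorem Lindblad_eq_zero_iff_commute (H : Matrix (Fin Ng ⊕ Fin Ne) (Fin Ng ⊕ Fin Ne) ℂ)
    (γ : Fin Ng → Fin Ne → ℝ) {ρ : Matrix (Fin Ng ⊕ Fin Ne) (Fin Ng ⊕ Fin Ne) ℂ}
    (hρ : ρ = Pg Ng Ne * ρ * Pg Ng Ne) : Lindblad Ng Ne H γ ρ = 0 ↔ Commute H ρ := by
  rw [Lindblad_eq_of_eq_Pg_mul_mul_Pg H γ hρ, smul_eq_zero, sub_eq_zero]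
  simp [Complex.I_ne_zero, Commute, SemiconjBy]

end Lindblad

section DarkState

variable {Ng Ne : ℕ} {H : Matrix (Fin Ng ⊕ Fin Ne) (Fin Ng ⊕ Fin Ne) ℂ} {γ : Fin Ng → Fin Ne → ℝ}

theorem isDarkState_pureState (hH : H.IsHermitian) {ψ : Fin Ng ⊕ Fin Ne → ℂ} (hψ : ψ ≠ 0)
    (hPψ : Pg Ng Ne *ᵥ ψ = ψ) {E : ℝ} (hHψ : H *ᵥ ψ = (E : ℂ) • ψ) :
    IsDarkState Ng Ne H γ (pureState ψ) := by
  have hsupp := pureState_eq_mul_mul_of_mulVec_eq isHermitian_Pg hPψ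
  exact ⟨posSemidef_pureState ψ, trace_pureState hψ,
    (Lindblad_eq_zero_iff_commute H γ hsupp).mpr (commute_pureState_of_mulVec_eq_smul hH hHψ),
    hsupp⟩

theorem IsDarkState.exists_kernel_vector {ρ : Matrix (Fin Ng ⊕ Fin Ne) (Fin Ng ⊕ Fin Ne) ℂ}
    (hρ : IsDarkState Ng Ne H γ ρ) {S : Type*} [Fintype S]
    {Ps : S → Matrix (Fin Ng ⊕ Fin Ne) (Fin Ng ⊕ Fin Ne) ℂ} (hPsProj : ∀ s, Ps s * Ps s = Ps s)
    (hPsOrth : ∀ s t, s ≠ t → Ps s * Ps t = 0) (hPsSum : ∑ s, Ps s = Pg Ng Ne)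
    {𝓔 : S → ℝ} (h𝓔 : Function.Injective 𝓔)
    (hspec : Pg Ng Ne * H * Pg Ng Ne = ∑ s, (𝓔 s : ℂ) • Ps s) :
    ∃ (s : S) (ψ : Fin Ng ⊕ Fin Ne → ℂ), ψ ≠ 0 ∧ Ps s *ᵥ ψ = ψ ∧ (Qe Ng Ne * H) *ᵥ ψ = 0 := by
  obtain ⟨-, htr, hL, hsupp⟩ := hρ
  have hPρ : Pg Ng Ne * ρ = ρ := by rw [hsupp, ← mul_assoc, ← mul_assoc, Pg_mul_Pg]
  have hρP : ρ * Pg Ng Ne = ρ := by rw [hsupp, mul_assoc, Pg_mul_Pg]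
  have hρ0 : ρ ≠ 0 := by
    rintro rfl
    simp at htr
  have hcomm : Commute H ρ := (Lindblad_eq_zero_iff_commute H γ hsupp).mp hL
  have hQHρ : Qe Ng Ne * H * ρ = 0 := by
    rw [mul_assoc, hcomm.eq, ← mul_assoc, ← hPρ, ← mul_assoc, Qe_mul_Pg, zero_mul, zero_mul]
  have hblock : ∀ t, ρ * Ps t = Ps t * ρ * Ps t := by
    refine mul_eq_mul_mul_of_forall_mul_mul_eq_zero (by rwa [hPsSum]) fun s t hst => ?_
    refine mul_mul_eq_zero_of_commute_sum_smul hPsProj hPsOrth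
      (Complex.ofReal_injective.comp h𝓔) ?_ hst
    exact hspec ▸ hcomm.mul_mul_of_mul_eq hPρ hρP
  obtain ⟨t, ht⟩ : ∃ t, ρ * Ps t ≠ 0 := by
    by_contra! h
    exact hρ0 (by rw [← hρP, ← hPsSum, Finset.mul_sum, Finset.sum_eq_zero fun t _ => h t])
  obtain ⟨ψ, hψ, hPsψ, hQHψ⟩ := exists_ne_zero_mulVec_eq_of_mul_eq ht
    (by rw [hblock, ← mul_assoc, ← mul_assoc, hPsProj]) (by rw [← mul_assoc, hQHρ, zero_mul])
  exact ⟨t, ψ, hψ, hPsψ, hQHψ⟩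

end DarkState

theorem dark_state_exists_iff_kernel_vector_general
    (Ng Ne : ℕ)
    (H : Matrix (Fin Ng ⊕ Fin Ne) (Fin Ng ⊕ Fin Ne) ℂ) (hH : H.IsHermitian)
    (γ : Fin Ng → Fin Ne → ℝ)
    (S : Type*) [Fintype S]
    (Ps : S → Matrix (Fin Ng ⊕ Fin Ne) (Fin Ng ⊕ Fin Ne) ℂ)
    (hPsProj : ∀ s, Ps s * Ps s = Ps s)
    (hPsOrth : ∀ s t, s ≠ t → Ps s * Ps t = 0)
    (hPsSum : ∑ s, Ps s = Pg Ng Ne)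
    (𝓔 : S → ℝ) (h𝓔 : Function.Injective 𝓔)
    (hspec : Pg Ng Ne * H * Pg Ng Ne = ∑ s, (𝓔 s : ℂ) • Ps s) :
    ((∃ ρ : Matrix (Fin Ng ⊕ Fin Ne) (Fin Ng ⊕ Fin Ne) ℂ,
        IsDarkState Ng Ne H γ ρ) ↔
      (∃ (s : S) (ψ : Fin Ng ⊕ Fin Ne → ℂ), ψ ≠ 0 ∧ Ps s *ᵥ ψ = ψ ∧
        (Qe Ng Ne * H) *ᵥ ψ = 0)) ∧
    (∀ (s : S) (ψ : Fin Ng ⊕ Fin Ne → ℂ), ψ ≠ 0 → Ps s *ᵥ ψ = ψ →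
      (Qe Ng Ne * H) *ᵥ ψ = 0 →
      IsDarkState Ng Ne H γ ((star ψ ⬝ᵥ ψ)⁻¹ • vecMulVec ψ (star ψ))) := by
  have dark : ∀ (s : S) (ψ : Fin Ng ⊕ Fin Ne → ℂ), ψ ≠ 0 → Ps s *ᵥ ψ = ψ →
      (Qe Ng Ne * H) *ᵥ ψ = 0 → IsDarkState Ng Ne H γ (pureState ψ) := by
    intro s ψ hψ hsψ hQHψ
    have hPψ : Pg Ng Ne *ᵥ ψ = ψ := by
      rw [← hsψ, mulVec_mulVec, ← hPsSum, sum_mul_of_orthogonal hPsProj hPsOrth]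
    have hPHψ : Pg Ng Ne *ᵥ (H *ᵥ ψ) = H *ᵥ ψ := Qe_mulVec_eq_zero_iff.mp (by rwa [mulVec_mulVec])
    exact isDarkState_pureState hH hψ hPψ
      (mulVec_eq_smul_of_mul_mul_eq_sum_smul hPsProj hPsOrth hspec hPψ hPHψ hsψ)
  refine ⟨⟨fun ⟨ρ, hρ⟩ => hρ.exists_kernel_vector hPsProj hPsOrth hPsSum h𝓔 hspec, ?_⟩, dark⟩
  rintro ⟨s, ψ, hψ, hsψ, hQHψ⟩
  exact ⟨_, dark s ψ hψ hsψ hQHψ⟩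

theorem dark_state_exists_iff_kernel_vector
    (Ng Ne : ℕ) (hNg : 1 ≤ Ng) (hNe : 1 ≤ Ne)
    (H : Matrix (Fin Ng ⊕ Fin Ne) (Fin Ng ⊕ Fin Ne) ℂ) (hH : H.IsHermitian)
    (γ : Fin Ng → Fin Ne → ℝ) (hγ : ∀ i j, 0 ≤ γ i j)
    (hγpos : ∀ j, 0 < ∑ i, γ i j)
    (S : Type*) [Fintype S]
    (Ps : S → Matrix (Fin Ng ⊕ Fin Ne) (Fin Ng ⊕ Fin Ne) ℂ)
    (hPsHerm : ∀ s, (Ps s)ᴴ = Ps s)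
    (hPsProj : ∀ s, Ps s * Ps s = Ps s)
    (hPsOrth : ∀ s t, s ≠ t → Ps s * Ps t = 0)
    (hPsSum : ∑ s, Ps s = Pg Ng Ne)
    (𝓔 : S → ℝ) (h𝓔 : Function.Injective 𝓔)
    (hspec : Pg Ng Ne * H * Pg Ng Ne = ∑ s, (𝓔 s : ℂ) • Ps s) :
    ((∃ ρ : Matrix (Fin Ng ⊕ Fin Ne) (Fin Ng ⊕ Fin Ne) ℂ,
        IsDarkState Ng Ne H γ ρ) ↔
      (∃ (s : S) (ψ : Fin Ng ⊕ Fin Ne → ℂ), ψ ≠ 0 ∧ Ps s *ᵥ ψ = ψ ∧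
        (Qe Ng Ne * H) *ᵥ ψ = 0)) ∧
    (∀ (s : S) (ψ : Fin Ng ⊕ Fin Ne → ℂ), ψ ≠ 0 → Ps s *ᵥ ψ = ψ →
      (Qe Ng Ne * H) *ᵥ ψ = 0 →
      IsDarkState Ng Ne H γ ((star ψ ⬝ᵥ ψ)⁻¹ • vecMulVec ψ (star ψ))) :=
  dark_state_exists_iff_kernel_vector_general Ng Ne H hH γ S Ps hPsProj hPsOrth hPsSum 𝓔 h𝓔 hspec
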